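/- Let G be an n-player reachability game on a possibly infinite arena, where player i's objective is Reach(T_i) for a target set T_i ⊆ V. If there exists a Nash equilibrium from v_0 such that no player's objective (resp. every player's objective) is satisfied by its outcome, then there exists a Nash equilibrium from v_0 such that no player's objective (resp. every player's objective) is satisfied by its outcome and in which every strategy is finite-memory with memory size at most n. -/

import Mathlib

open scoped ENNReal Classical

/-- An `n`-player arena on a (possibly infinite) directed graph: an edge relation
with no deadlocks, together with an assignment of each vertex to its owner. -/
structure Arena (V : Type) (n : ℕ) where
  E : V → V → Prop
  owner : V → Fin n
  no_deadlock : ∀ v, ∃ v', E v v'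

namespace Arena

variable {V : Type} {n : ℕ}

/-- A play: an infinite sequence of vertices following edges. -/
def IsPlay (A : Arena V n) (π : ℕ → V) : Prop := ∀ j, A.E (π j) (π (j + 1))

/-- A strategy: given the past history (the earlier vertices, oldest first) and the
current vertex, pick an `E`-successor of the current vertex. -/
structure Strategy (A : Arena V n) where
  next : List V → V → V
  valid : ∀ h v, A.E v (next h v)

/-- The list of the first `j` vertices of a play. -/
def pref (π : ℕ → V) (j : ℕ) : List V := (List.range j).map π

/-- A play is consistent with the strategy `σ` used by player `i`. -/
def Consistent (A : Arena V n) (i : Fin n) (σ : A.Strategy) (π : ℕ → V) : Prop :=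
  ∀ j, A.owner (π j) = i → π (j + 1) = σ.next (pref π j) (π j)

/-- A memoryless strategy only depends on the current vertex. -/
def Memoryless {A : Arena V n} (σ : A.Strategy) : Prop :=
  ∀ h h' v, σ.next h v = σ.next h' v

def outcomeAux (A : Arena V n) (σ : Fin n → A.Strategy) (v0 : V) : ℕ → List V × V
  | 0 => ([], v0)
  | j + 1 =>
      let p := outcomeAux A σ v0 j
      (p.1 ++ [p.2], (σ (A.owner p.2)).next p.1 p.2)

/-- The outcome of the strategy profile `σ` from `v0`: the unique play from `v0`
consistent with every strategy of the profile. -/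
def outcome (A : Arena V n) (σ : Fin n → A.Strategy) (v0 : V) (j : ℕ) : V :=
  (outcomeAux A σ v0 j).2

/-- Reachability objective: visit `T`. -/
def ReachObj (T : Set V) : Set (ℕ → V) := {π | ∃ j, π j ∈ T}

/-- Safety objective: never visit `T`. -/
def SafeObj (T : Set V) : Set (ℕ → V) := {π | ∀ j, π j ∉ T}

/-- Büchi objective: visit `T` infinitely often. -/
def BuchiObj (T : Set V) : Set (ℕ → V) := {π | ∀ j, ∃ k, j ≤ k ∧ π k ∈ T}

/-- co-Büchi objective: visit `T` only finitely often. -/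
def CoBuchiObj (T : Set V) : Set (ℕ → V) := {π | ∃ j, ∀ k, j ≤ k → π k ∉ T}

/-- Shortest-path cost of a play: the total weight up to the first visit of `T`,
and `⊤` if `T` is never visited. -/
noncomputable def spCost (w : V → V → ℕ) (T : Set V) (π : ℕ → V) : ℝ≥0∞ :=
  if ∃ k, π k ∈ T then
    (Finset.range (sInf {k | π k ∈ T})).sum fun j => (w (π j) (π (j + 1)) : ℝ≥0∞)
  else ⊤

/-- Winning region of player `p` (whose objective is `Ω`) in a two-player game:
vertices from which `p` has a strategy all of whose consistent plays lie in `Ω`. -/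
def WinRegion (A : Arena V 2) (p : Fin 2) (Ω : Set (ℕ → V)) : Set V :=
  {v | ∃ σ : A.Strategy, ∀ π, A.IsPlay π → π 0 = v → A.Consistent p σ π → π ∈ Ω}

/-- Lower value `inf_{σ₁} sup_{σ₂}` of a two-player zero-sum game with cost `c`
(minimised by player 1, maximised by player 2). -/
noncomputable def valIS (A : Arena V 2) (c : (ℕ → V) → ℝ≥0∞) (v : V) : ℝ≥0∞ :=
  ⨅ σ1 : A.Strategy, ⨆ σ2 : A.Strategy, c (outcome A ![σ1, σ2] v)

/-- Upper value `sup_{σ₂} inf_{σ₁}`. -/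
noncomputable def valSI (A : Arena V 2) (c : (ℕ → V) → ℝ≥0∞) (v : V) : ℝ≥0∞ :=
  ⨆ σ2 : A.Strategy, ⨅ σ1 : A.Strategy, c (outcome A ![σ1, σ2] v)

/-- Nash equilibrium from `v0` for cost functions (each player minimises):
no unilateral deviation decreases the deviator's cost. -/
def IsNECost (A : Arena V n) (cost : Fin n → (ℕ → V) → ℝ≥0∞)
    (σ : Fin n → A.Strategy) (v0 : V) : Prop :=
  ∀ (i : Fin n) (τ : A.Strategy),
    cost i (outcome A σ v0) ≤ cost i (outcome A (Function.update σ i τ) v0)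

/-- Nash equilibrium from `v0` for objectives: if a unilateral deviation of player `i`
satisfies `Ω i`, then so does the equilibrium outcome. -/
def IsNEObj (A : Arena V n) (Ω : Fin n → Set (ℕ → V))
    (σ : Fin n → A.Strategy) (v0 : V) : Prop :=
  ∀ (i : Fin n) (τ : A.Strategy),
    outcome A (Function.update σ i τ) v0 ∈ Ω i → outcome A σ v0 ∈ Ω i

/-- The coalition arena of player `i`: player `i` (as player `0`) against all others. -/
def coalition (A : Arena V n) (i : Fin n) : Arena V 2 where
  E := A.E
  owner := fun v => if A.owner v = i then 0 else 1
  no_deadlock := A.no_deadlock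

/-- Winning region of player `i` in their coalition game for objective `Ω`. -/
def coalWin (A : Arena V n) (i : Fin n) (Ω : Set (ℕ → V)) : Set V :=
  WinRegion (coalition A i) 0 Ω

/-- Value of a vertex in player `i`'s coalition game with cost `c`. -/
noncomputable def coalVal (A : Arena V n) (i : Fin n) (c : (ℕ → V) → ℝ≥0∞) (v : V) :
    ℝ≥0∞ :=
  valIS (coalition A i) c v

/-- Players whose reachability objective is satisfied by `π`. -/
def satReach (T : Fin n → Set V) (π : ℕ → V) : Set (Fin n) := {i | ∃ j, π j ∈ T i}

/-- Players whose safety objective is satisfied by `π`. -/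
def satSafe (T : Fin n → Set V) (π : ℕ → V) : Set (Fin n) := {i | ∀ j, π j ∉ T i}

/-- Players whose Büchi objective is satisfied by `π`. -/
def satBuchi (T : Fin n → Set V) (π : ℕ → V) : Set (Fin n) :=
  {i | ∀ j, ∃ k, j ≤ k ∧ π k ∈ T i}

/-- Players whose co-Büchi objective is satisfied by `π`. -/
def satCoBuchi (T : Fin n → Set V) (π : ℕ → V) : Set (Fin n) :=
  {i | ∃ j, ∀ k, j ≤ k → π k ∉ T i}

/-- Earliest positions at which the targets visited by `π` are first visited. -/
def visitSet (T : Fin n → Set V) (π : ℕ → V) : Set ℕ :=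
  {m | ∃ i, (∃ j, π j ∈ T i) ∧ m = sInf {j | π j ∈ T i}}

/-- A Mealy machine with memory states `M`. -/
structure Mealy (A : Arena V n) (M : Type) where
  init : M
  up : M → V → M
  nxt : M → V → V
  valid : ∀ m v, A.E v (nxt m v)

/-- The strategy `σ` is induced by the Mealy machine `mm`. -/
def InducedBy {A : Arena V n} {M : Type} (σ : A.Strategy) (mm : Mealy A M) : Prop :=
  ∀ h v, σ.next h v = mm.nxt (h.foldl mm.up mm.init) v

/-- `σ` has memory size at most `b`. -/
def HasMemorySize {A : Arena V n} (σ : A.Strategy) (b : ℕ) : Prop :=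
  ∃ (M : Type) (mm : Mealy A M), Finite M ∧ Nat.card M ≤ b ∧ InducedBy σ mm

/-- `σ` is a finite-memory strategy. -/
def FiniteMemory {A : Arena V n} (σ : A.Strategy) : Prop :=
  ∃ (M : Type) (mm : Mealy A M), Finite M ∧ InducedBy σ mm

/-- The (finite) segment of `π` between positions `a` and `b` is a simple history. -/
def SimpleSeg (π : ℕ → V) (a b : ℕ) : Prop :=
  ∀ m m', a ≤ m → m ≤ b → a ≤ m' → m' ≤ b → π m = π m' → m = m'

/-- The suffix of `π` from position `a` is a simple play. -/
def SimplePlaySeg (π : ℕ → V) (a : ℕ) : Prop :=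
  ∀ m m', a ≤ m → a ≤ m' → π m = π m' → m = m'

/-- The suffix of `π` from position `a` is a simple lasso `p c^ω` with `p c`
a simple history. -/
def SimpleLassoSeg (π : ℕ → V) (a : ℕ) : Prop :=
  ∃ k ℓ, 0 < ℓ ∧ (∀ m, a + k ≤ m → π (m + ℓ) = π m) ∧
    ∀ m m', a ≤ m → m < a + k + ℓ → a ≤ m' → m' < a + k + ℓ → π m = π m' → m = m'

/-- The segment of `π` between positions `a` and `b` is a simple cycle. -/
def SimpleCycleSeg (π : ℕ → V) (a b : ℕ) : Prop :=
  a < b ∧ π b = π a ∧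
    ∀ m m', a ≤ m → m < b → a ≤ m' → m' < b → π m = π m' → m = m'

/-- Total weight of a history (a list of vertices). -/
def histWeight (w : V → V → ℕ) : List V → ℕ
  | [] => 0
  | [_] => 0
  | a :: b :: t => w a b + histWeight w (b :: t)

/-- The list of vertices along positions `a..b` (inclusive) of a play. -/
def segList (π : ℕ → V) (a b : ℕ) : List V :=
  (List.range (b - a + 1)).map fun m => π (a + m)

/-- The segment of `π` between positions `a` and `b` has minimal weight among all
histories that share its first and last vertex and traverse only its vertices. -/
def MinWeightSeg (A : Arena V n) (w : V → V → ℕ) (π : ℕ → V) (a b : ℕ) : Prop :=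
  ∀ h : List V, h ≠ [] → List.Chain' A.E h →
    h.head? = some (π a) → h.getLast? = some (π b) →
    (∀ x ∈ h, ∃ m, a ≤ m ∧ m ≤ b ∧ π m = x) →
    histWeight w (segList π a b) ≤ histWeight w h

/-- Given cut positions `p`, segments number `l` and `l'` of `π` carry the same
vertex sequence. -/
def SegEq (π : ℕ → V) (p : ℕ → ℕ) (l l' : ℕ) : Prop :=
  p (l' + 1) - p l' = p (l + 1) - p l ∧
    ∀ m, m ≤ p (l + 1) - p l → π (p l' + m) = π (p l + m)

/-- There is no cycle of the arena using only vertices of `S` and avoiding `avoid`. -/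
def NoCycleAvoid (A : Arena V n) (S : Set V) (avoid : V) : Prop :=
  ¬ ∃ (m : ℕ) (c : ℕ → V), 0 < m ∧ (∀ j, j < m → A.E (c j) (c (j + 1))) ∧
      c m = c 0 ∧ ∀ j, j ≤ m → c j ∈ S ∧ c j ≠ avoid

end Arena

open Arena

/-!
In an equilibrium where everybody loses, the outcome never enters the coalition winning region
`W i` of any player `i`: there, `i` would deviate to a winning strategy. Playing positionally along
that outcome, and after a deviation keeping the play outside the winning region of the last player
who moved on it, loses for every deviator, since a vertex of player `i` outside `W i` has all
its successors outside `W i` and any other vertex outside `W i` has one; the memory only stores that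
player. When everybody wins, every profile whose outcome visits all targets is an equilibrium, and
one is obtained by walking along shortest paths through the first visits of the targets on the
given outcome, in their order there; the memory counts the checkpoints reached, of which there are
at most `n` besides the initial vertex.
-/

namespace Arena

variable {V : Type} {n : ℕ}

lemma pref_succ (π : ℕ → V) (j : ℕ) : pref π (j + 1) = pref π j ++ [π j] := by
  simp [pref, List.range_succ]

lemma length_pref (π : ℕ → V) (j : ℕ) : (pref π j).length = j := by
  simp [pref]

lemma drop_pref (π : ℕ → V) (j k : ℕ) :
    (pref π (j + k)).drop k = pref (fun m => π (m + k)) j := by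
  rw [Nat.add_comm j k]
  simp only [pref, List.range_add, List.map_append, List.map_map, List.drop_left',
    List.length_map, List.length_range]
  exact List.map_congr_left fun m _ => by simp [Nat.add_comm]

lemma headD_pref (π : ℕ → V) (j : ℕ) : (pref π j).headD (π j) = π 0 := by
  cases j <;> simp [pref, List.range_succ_eq_map]

lemma foldl_pref_succ {M : Type} (f : M → V → M) (m : M) (π : ℕ → V) (t : ℕ) :
    (pref π (t + 1)).foldl f m = f ((pref π t).foldl f m) (π t) := by
  rw [pref_succ, List.foldl_append]
  rfl

variable (A : Arena V n)

lemma fst_outcomeAux (σ : Fin n → A.Strategy) (v0 : V) :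
    ∀ j, (outcomeAux A σ v0 j).1 = pref (outcome A σ v0) j
  | 0 => rfl
  | j + 1 => by
    rw [pref_succ, ← fst_outcomeAux σ v0 j]
    rfl

lemma outcome_succ (σ : Fin n → A.Strategy) (v0 : V) (j : ℕ) :
    outcome A σ v0 (j + 1) =
      (σ (A.owner (outcome A σ v0 j))).next (pref (outcome A σ v0) j) (outcome A σ v0 j) := by
  rw [← fst_outcomeAux]
  rfl

lemma isPlay_outcome (σ : Fin n → A.Strategy) (v0 : V) : A.IsPlay (outcome A σ v0) :=
  fun j => by
    rw [outcome_succ]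
    exact Strategy.valid _ _ _

lemma consistent_outcome_update (σ : Fin n → A.Strategy) (i : Fin n) (τ : A.Strategy)
    (v0 : V) : A.Consistent i τ (outcome A (Function.update σ i τ) v0) :=
  fun j hj => by rw [outcome_succ, hj, Function.update_self]

lemma outcome_update_succ_of_owner_ne (σ : Fin n → A.Strategy) {i : Fin n} (τ : A.Strategy)
    (v0 : V) {t : ℕ} (h : A.owner (outcome A (Function.update σ i τ) v0 t) ≠ i) :
    outcome A (Function.update σ i τ) v0 (t + 1) =
      (σ (A.owner (outcome A (Function.update σ i τ) v0 t))).next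
        (pref (outcome A (Function.update σ i τ) v0) t)
        (outcome A (Function.update σ i τ) v0 t) := by
  rw [outcome_succ, Function.update_of_ne h]

lemma outcome_eq_of_agree {σ₁ σ₂ : Fin n → A.Strategy} {k : ℕ}
    (h : ∀ j (hist : List V) v, hist.length < k → (σ₁ j).next hist v = (σ₂ j).next hist v)
    (v0 : V) {t : ℕ} (ht : t ≤ k) : outcome A σ₁ v0 t = outcome A σ₂ v0 t := by
  suffices ∀ t ≤ k, outcomeAux A σ₁ v0 t = outcomeAux A σ₂ v0 t from
    congrArg Prod.snd (this t ht)
  intro t ht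
  induction t with
  | zero => rfl
  | succ t ih =>
    rw [outcomeAux, outcomeAux, ih (by omega),
      h _ _ _ (by rw [fst_outcomeAux, length_pref]; omega)]

lemma isNEObj_of_forall_mem {Ω : Fin n → Set (ℕ → V)} {σ : Fin n → A.Strategy} {v0 : V}
    (h : ∀ i, outcome A σ v0 ∈ Ω i) : A.IsNEObj Ω σ v0 :=
  fun i _ _ => h i

noncomputable def succIn (X : Set V) (v : V) : V :=
  if h : ∃ u, A.E v u ∧ u ∈ X then h.choose else (A.no_deadlock v).choose

lemma succIn_edge (X : Set V) (v : V) : A.E v (A.succIn X v) := by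
  unfold succIn
  split_ifs with h
  exacts [h.choose_spec.1, (A.no_deadlock v).choose_spec]

lemma succIn_mem {X : Set V} {v : V} (h : ∃ u, A.E v u ∧ u ∈ X) : A.succIn X v ∈ X := by
  rw [succIn, dif_pos h]
  exact h.choose_spec.2

noncomputable instance : Nonempty A.Strategy :=
  ⟨⟨fun _ => A.succIn ∅, fun _ => A.succIn_edge ∅⟩⟩

/-- `(h.drop k).headD v` is the vertex visited at time `k`. -/
def Strategy.switch {A : Arena V n} (σ : A.Strategy) (k : ℕ) (τ : V → A.Strategy) :
    A.Strategy where
  next h v := if h.length < k then σ.next h v else (τ ((h.drop k).headD v)).next (h.drop k) v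
  valid h v := by split_ifs <;> apply Strategy.valid

lemma consistent_switch {σ : A.Strategy} {k : ℕ} {τ : V → A.Strategy} {i : Fin n}
    {ρ : ℕ → V} (h : A.Consistent i (σ.switch k τ) ρ) :
    A.Consistent i (τ (ρ k)) (fun m => ρ (m + k)) := by
  intro j hj
  have hk : ¬ (pref ρ (j + k)).length < k := by
    rw [length_pref]
    omega
  change ρ (j + 1 + k) = _
  rw [Nat.add_right_comm, h (j + k) hj]
  simp only [Strategy.switch, if_neg hk, drop_pref]
  rw [headD_pref (fun m => ρ (m + k))]
  simp

def WinsFrom (i : Fin n) (Ω : Set (ℕ → V)) (σ : A.Strategy) (v : V) : Prop :=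
  ∀ π, A.IsPlay π → π 0 = v → A.Consistent i σ π → π ∈ Ω

lemma mem_coalWin_iff {i : Fin n} {Ω : Set (ℕ → V)} {v : V} :
    v ∈ coalWin A i Ω ↔ ∃ σ : A.Strategy, A.WinsFrom i Ω σ v := by
  have hown : ∀ w, (coalition A i).owner w = 0 ↔ A.owner w = i := fun w => by
    by_cases h : A.owner w = i <;> simp [coalition, h]
  constructor
  · rintro ⟨σ, hσ⟩
    exact ⟨⟨σ.next, σ.valid⟩, fun π hπ h0 hc => hσ π hπ h0 fun j hj => hc j ((hown _).1 hj)⟩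
  · rintro ⟨σ, hσ⟩
    exact ⟨⟨σ.next, σ.valid⟩, fun π hπ h0 hc => hσ π hπ h0 fun j hj => hc j ((hown _).2 hj)⟩

noncomputable def winStrat (i : Fin n) (Ω : Set (ℕ → V)) (v : V) : A.Strategy :=
  Classical.epsilon fun σ => A.WinsFrom i Ω σ v

lemma winsFrom_winStrat {i : Fin n} {Ω : Set (ℕ → V)} {v : V} (hv : v ∈ coalWin A i Ω) :
    A.WinsFrom i Ω (A.winStrat i Ω v) v :=
  Classical.epsilon_spec ((A.mem_coalWin_iff).1 hv)

def ClosedUnderPrefix (Ω : Set (ℕ → V)) : Prop :=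
  ∀ ρ k, (fun m => ρ (m + k)) ∈ Ω → ρ ∈ Ω

lemma closedUnderPrefix_reachObj (T : Set V) : ClosedUnderPrefix (ReachObj T) :=
  fun _ k ⟨j, hj⟩ => ⟨j + k, hj⟩

lemma subset_coalWin_reachObj (i : Fin n) (T : Set V) : T ⊆ coalWin A i (ReachObj T) :=
  fun _ hv => A.mem_coalWin_iff.2 ⟨Classical.arbitrary _, fun _ _ h0 _ => ⟨0, h0 ▸ hv⟩⟩

lemma mem_coalWin_of_successors {i : Fin n} {Ω : Set (ℕ → V)} (hΩ : ClosedUnderPrefix Ω)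
    {v u₀ : V} (he : A.E v u₀)
    (h : ∀ u, A.E v u → (A.owner v = i → u = u₀) → u ∈ coalWin A i Ω) : v ∈ coalWin A i Ω := by
  let σ₀ : A.Strategy := ⟨fun _ => A.succIn {u₀}, fun _ => A.succIn_edge {u₀}⟩
  refine A.mem_coalWin_iff.2 ⟨σ₀.switch 1 (A.winStrat i Ω), fun ρ hρ h0 hc => hΩ ρ 1 ?_⟩
  have h1 : ρ 1 ∈ coalWin A i Ω := h _ (h0 ▸ hρ 0) fun ho => by
    rw [hc 0 (h0 ▸ ho)]
    change A.succIn {u₀} (ρ 0) = u₀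
    exact h0 ▸ A.succIn_mem ⟨u₀, he, Set.mem_singleton u₀⟩
  exact A.winsFrom_winStrat h1 _ (fun j => hρ (j + 1)) rfl (A.consistent_switch hc)

lemma mem_coalWin_of_edge {i : Fin n} {Ω : Set (ℕ → V)} (hΩ : ClosedUnderPrefix Ω) {v u : V}
    (hv : A.owner v = i) (he : A.E v u) (hu : u ∈ coalWin A i Ω) : v ∈ coalWin A i Ω :=
  A.mem_coalWin_of_successors hΩ he fun _ _ h => h hv ▸ hu

lemma mem_coalWin_of_forall_edge {i : Fin n} {Ω : Set (ℕ → V)} (hΩ : ClosedUnderPrefix Ω)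
    {v : V} (h : ∀ u, A.E v u → u ∈ coalWin A i Ω) : v ∈ coalWin A i Ω :=
  A.mem_coalWin_of_successors hΩ (A.no_deadlock v).choose_spec fun u hu _ => h u hu

theorem outcome_not_mem_coalWin {Ω : Fin n → Set (ℕ → V)} {σ : Fin n → A.Strategy} {v0 : V}
    {i : Fin n} (hΩ : ClosedUnderPrefix (Ω i)) (hNE : A.IsNEObj Ω σ v0)
    (hi : outcome A σ v0 ∉ Ω i) (k : ℕ) : outcome A σ v0 k ∉ coalWin A i (Ω i) := by
  intro hk
  set τ := (σ i).switch k (A.winStrat i (Ω i))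
  set ϖ := outcome A (Function.update σ i τ) v0
  have hagree : ϖ k = outcome A σ v0 k := by
    refine A.outcome_eq_of_agree (fun j h v hh => ?_) v0 le_rfl
    rcases eq_or_ne j i with rfl | hj
    · simp [τ, Strategy.switch, hh]
    · rw [Function.update_of_ne hj]
  have hk' : ϖ k ∈ coalWin A i (Ω i) := by rwa [hagree]
  refine hi (hNE i τ (hΩ _ k (A.winsFrom_winStrat hk' _ (fun j => ?_) ?_
    (A.consistent_switch (A.consistent_outcome_update σ i τ v0)))))
  · simpa [Nat.add_right_comm] using A.isPlay_outcome _ v0 (j + k)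
  · simp [ϖ]

def Mealy.strategy {M : Type} (mm : Mealy A M) : A.Strategy :=
  ⟨fun h v => mm.nxt (h.foldl mm.up mm.init) v, fun _ _ => mm.valid _ _⟩

lemma Mealy.hasMemorySize_strategy {M : Type} [Finite M] (mm : Mealy A M) :
    HasMemorySize mm.strategy (Nat.card M) :=
  ⟨M, mm, ‹_›, le_rfl, fun _ _ => rfl⟩

/-- Inside `S` the play stays in `S`, and the memory records the owner of the last vertex seen in
`S`; once the play has left `S`, that player is kept outside their coalition winning region. -/
noncomputable def followOrPunish (Ω : Fin n → Set (ℕ → V)) (S : Set V) (hn : 0 < n) :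
    Mealy A (Fin n) where
  init := ⟨0, hn⟩
  up m v := if v ∈ S then A.owner v else m
  nxt m v := if v ∈ S then A.succIn S v else A.succIn (coalWin A m (Ω m))ᶜ v
  valid m v := by split_ifs <;> apply succIn_edge

theorem outcome_followOrPunish_not_mem_coalWin (hn : 0 < n) {Ω : Fin n → Set (ℕ → V)}
    {S : Set V} {v0 : V} (hv0 : v0 ∈ S) (hS : ∀ v ∈ S, ∃ u, A.E v u ∧ u ∈ S) {i : Fin n}
    (hΩ : ClosedUnderPrefix (Ω i)) (hSW : ∀ v ∈ S, v ∉ coalWin A i (Ω i)) (τ : A.Strategy)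
    (t : ℕ) :
    outcome A (Function.update (fun _ => (A.followOrPunish Ω S hn).strategy) i τ) v0 t ∉
      coalWin A i (Ω i) := by
  set mm := A.followOrPunish Ω S hn
  set D := outcome A (Function.update (fun _ => mm.strategy) i τ) v0
  set s : ℕ → Fin n := fun t => (pref D t).foldl mm.up mm.init
  have hs : ∀ t, s (t + 1) = if D t ∈ S then A.owner (D t) else s t :=
    fun t => foldl_pref_succ mm.up mm.init D t
  suffices h : ∀ t, D t ∉ coalWin A i (Ω i) ∧ (D t ∈ S ∨ s t = i) from (h t).1
  intro t
  induction t with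
  | zero => exact ⟨hSW _ hv0, Or.inl hv0⟩
  | succ t ih =>
    obtain ⟨hW, hSs⟩ := ih
    by_cases ho : A.owner (D t) = i
    · refine ⟨fun h => hW (A.mem_coalWin_of_edge hΩ ho (A.isPlay_outcome _ v0 t) h), Or.inr ?_⟩
      rw [hs]
      split_ifs with h
      exacts [ho, hSs.resolve_left h]
    have hnext : D (t + 1) = mm.nxt (s t) (D t) :=
      A.outcome_update_succ_of_owner_ne _ τ v0 ho
    by_cases hDS : D t ∈ S
    · have hmem : D (t + 1) ∈ S := by
        rw [hnext]
        simpa [mm, followOrPunish, hDS] using A.succIn_mem (hS _ hDS)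
      exact ⟨hSW _ hmem, Or.inl hmem⟩
    · have hst : s t = i := hSs.resolve_left hDS
      refine ⟨?_, Or.inr (by rw [hs, if_neg hDS, hst])⟩
      have hout : ∃ u, A.E (D t) u ∧ u ∈ (coalWin A i (Ω i))ᶜ := by
        by_contra! h
        exact hW (A.mem_coalWin_of_forall_edge hΩ fun u hu => by simpa using h u hu)
      rw [hnext]
      simpa [mm, followOrPunish, hDS, hst] using A.succIn_mem hout

theorem exists_losing_ne_of_safe_set (hn : 0 < n) {T : Fin n → Set V} {S : Set V} {v0 : V}
    (hv0 : v0 ∈ S) (hS : ∀ v ∈ S, ∃ u, A.E v u ∧ u ∈ S)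
    (hSW : ∀ i, ∀ v ∈ S, v ∉ coalWin A i (ReachObj (T i))) :
    ∃ σ : Fin n → A.Strategy, A.IsNEObj (fun i => ReachObj (T i)) σ v0 ∧
      (∀ i, outcome A σ v0 ∉ ReachObj (T i)) ∧ ∀ i, HasMemorySize (σ i) n := by
  set mm := A.followOrPunish (fun i => ReachObj (T i)) S hn
  have hdev : ∀ i τ, outcome A (Function.update (fun _ => mm.strategy) i τ) v0 ∉
      ReachObj (T i) := fun i τ ⟨t, ht⟩ =>
    A.outcome_followOrPunish_not_mem_coalWin hn hv0 hS (closedUnderPrefix_reachObj _) (hSW i)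
      τ t (A.subset_coalWin_reachObj i _ ht)
  refine ⟨fun _ => mm.strategy, fun i τ h => absurd h (hdev i τ), fun i => ?_, fun _ => ?_⟩
  · simpa using hdev i mm.strategy
  · simpa using mm.hasMemorySize_strategy

def ReachIn : ℕ → V → V → Prop
  | 0, v, x => v = x
  | k + 1, v, x => ∃ u, A.E v u ∧ ReachIn k u x

lemma IsPlay.reachIn {π : ℕ → V} (hπ : A.IsPlay π) (a k : ℕ) :
    A.ReachIn k (π a) (π (a + k)) := by
  induction k generalizing a with
  | zero => rfl
  | succ k ih =>
    exact ⟨π (a + 1), hπ a, by simpa [Nat.add_right_comm, Nat.add_assoc] using ih (a + 1)⟩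

noncomputable def stepDist (v x : V) : ℕ := sInf {k | A.ReachIn k v x}

lemma stepDist_le {v x : V} {k : ℕ} (h : A.ReachIn k v x) : A.stepDist v x ≤ k :=
  Nat.sInf_le h

noncomputable def approach (x v : V) : V :=
  A.succIn {u | ∃ k < A.stepDist v x, A.ReachIn k u x} v

lemma approach_spec {x v : V} {k : ℕ} (hk : A.ReachIn k v x) (hne : v ≠ x) :
    ∃ k' < A.stepDist v x, A.ReachIn k' (A.approach x v) x := by
  refine A.succIn_mem (X := {u | ∃ k' < A.stepDist v x, A.ReachIn k' u x}) ?_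
  have hmem : A.ReachIn (A.stepDist v x) v x := Nat.sInf_mem (s := {k | A.ReachIn k v x}) ⟨k, hk⟩
  obtain ⟨d, hd⟩ : ∃ d, A.stepDist v x = d + 1 :=
    Nat.exists_eq_succ_of_ne_zero fun h0 => hne (by rw [h0] at hmem; exact hmem)
  rw [hd] at hmem
  obtain ⟨u, he, hu⟩ := hmem
  exact ⟨u, he, d, by omega, hu⟩

noncomputable def checkpointUp (x : ℕ → V) {k : ℕ} (m : Fin k) (v : V) : Fin k :=
  if h : m.1 + 1 < k ∧ v = x (m.1 + 1) then ⟨m.1 + 1, h.1⟩ else m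

lemma checkpointUp_of_eq (x : ℕ → V) {k : ℕ} {m : Fin k} (h : m.1 + 1 < k) :
    (checkpointUp x m (x (m.1 + 1))).1 = m.1 + 1 := by
  simp [checkpointUp, h]

lemma checkpointUp_of_ne (x : ℕ → V) {k : ℕ} {m : Fin k} {v : V} (h : v ≠ x (m.1 + 1)) :
    checkpointUp x m v = m := by
  simp [checkpointUp, h]

/-- In memory state `m` the machine heads for the checkpoint `x (m + 1)` along a shortest path. -/
noncomputable def checkpointMachine (x : ℕ → V) {k : ℕ} (hk : 0 < k) : Mealy A (Fin k) where
  init := ⟨0, hk⟩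
  up := checkpointUp x
  nxt m v := A.approach (x ((checkpointUp x m v).1 + 1)) v
  valid _ _ := A.succIn_edge _ _

section CheckpointRun

variable {A} {x : ℕ → V} {k : ℕ} {ρ : ℕ → V} {q : ℕ → Fin k}

lemma checkpoint_run_reaches (hρ : ∀ t, ρ (t + 1) = A.approach (x ((q t).1 + 1)) (ρ t))
    (hq : ∀ t, q (t + 1) = checkpointUp x (q t) (ρ (t + 1))) {l t d : ℕ} (hl : (q t).1 = l)
    (hne : ρ t ≠ x (l + 1)) (hd : A.ReachIn d (ρ t) (x (l + 1))) :
    ∃ t', ρ t' = x (l + 1) ∧ (l + 1 < k → (q t').1 = l + 1) := by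
  induction hD : A.stepDist (ρ t) (x (l + 1)) using Nat.strong_induction_on generalizing t d with
  | _ D IH =>
    obtain ⟨d', hd'lt, hd'⟩ := A.approach_spec hd hne
    have hstep : ρ (t + 1) = A.approach (x (l + 1)) (ρ t) := hl ▸ hρ t
    rw [← hstep] at hd'
    by_cases harr : ρ (t + 1) = x (l + 1)
    · refine ⟨t + 1, harr, fun hlk => ?_⟩
      rw [hq, harr, ← hl]
      exact checkpointUp_of_eq x (hl ▸ hlk)
    · have hq' : (q (t + 1)).1 = l := by
        rw [hq, checkpointUp_of_ne x (hl ▸ harr), hl]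
      exact IH _ (hD ▸ lt_of_le_of_lt (A.stepDist_le hd') hd'lt) hq' harr hd' rfl

lemma checkpoint_run_visits (hρ : ∀ t, ρ (t + 1) = A.approach (x ((q t).1 + 1)) (ρ t))
    (hq : ∀ t, q (t + 1) = checkpointUp x (q t) (ρ (t + 1))) (hk : 0 < k)
    (hq0 : q 0 = checkpointUp x ⟨0, hk⟩ (ρ 0)) (hρ0 : ρ 0 = x 0) {r : ℕ} (hr : r ≤ k)
    (hx : ∀ l < r, x l ≠ x (l + 1) ∧ ∃ d, A.ReachIn d (x l) (x (l + 1))) :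
    ∀ l < r, ∃ t, ρ t = x (l + 1) ∧ (l + 1 < k → (q t).1 = l + 1) := by
  intro l
  induction l with
  | zero =>
    intro h
    obtain ⟨hne, d, hd⟩ := hx 0 h
    rw [← hρ0] at hne hd
    exact checkpoint_run_reaches hρ hq (by rw [hq0, checkpointUp_of_ne x hne]) hne hd
  | succ l ih =>
    intro h
    obtain ⟨t, ht, hqt⟩ := ih (by omega)
    obtain ⟨hne, d, hd⟩ := hx (l + 1) h
    rw [← ht] at hne hd
    exact checkpoint_run_reaches hρ hq (hqt (by omega)) hne hd

end CheckpointRun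

theorem checkpointMachine_visits (x : ℕ → V) {k : ℕ} (hk : 0 < k) {r : ℕ} (hr : r ≤ k)
    (hx : ∀ l < r, x l ≠ x (l + 1) ∧ ∃ d, A.ReachIn d (x l) (x (l + 1))) :
    ∀ l < r, ∃ t,
      outcome A (fun _ => (A.checkpointMachine x hk).strategy) (x 0) t = x (l + 1) := by
  set mm := A.checkpointMachine x hk
  set out := outcome A (fun _ => mm.strategy) (x 0)
  let q : ℕ → Fin k := fun t => (pref out (t + 1)).foldl mm.up mm.init
  have hρ : ∀ t, out (t + 1) = A.approach (x ((q t).1 + 1)) (out t) := fun t => by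
    simp only [out, outcome_succ, q, foldl_pref_succ]
    rfl
  have hq : ∀ t, q (t + 1) = checkpointUp x (q t) (out (t + 1)) :=
    fun t => foldl_pref_succ mm.up mm.init out (t + 1)
  intro l hl
  obtain ⟨t, ht, -⟩ := checkpoint_run_visits hρ hq hk rfl rfl hr hx l hl
  exact ⟨t, ht⟩

noncomputable def firstVisits {ι : Type} [Fintype ι] (T : ι → Set V) (π : ℕ → V) : Finset ℕ :=
  insert 0 (Finset.univ.image fun i => sInf {j | π j ∈ T i})

section FirstVisits

variable {ι : Type} [Fintype ι] {T : ι → Set V} {π : ℕ → V}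

lemma card_firstVisits_le : (firstVisits T π).card ≤ Fintype.card ι + 1 :=
  calc (firstVisits T π).card
      ≤ (Finset.univ.image fun i => sInf {j | π j ∈ T i}).card + 1 := Finset.card_insert_le _ _
    _ ≤ Fintype.card ι + 1 := Nat.add_le_add_right Finset.card_image_le 1

lemma nth_firstVisits_zero : Nat.nth (· ∈ firstVisits T π) 0 = 0 :=
  Nat.nth_zero_of_zero (Finset.mem_insert_self 0 _)

lemma nth_firstVisits_lt_succ {l : ℕ} (hl : l + 1 < (firstVisits T π).card) :
    Nat.nth (· ∈ firstVisits T π) l < Nat.nth (· ∈ firstVisits T π) (l + 1) :=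
  Nat.nth_lt_nth_of_lt_card (firstVisits T π).finite_toSet (Nat.lt_succ_self l)
    (by rwa [Finset.finite_toSet_toFinset])

lemma apply_nth_firstVisits_ne (hvis : ∀ i, ∃ j, π j ∈ T i) {l : ℕ}
    (hl : l + 1 < (firstVisits T π).card) :
    π (Nat.nth (· ∈ firstVisits T π) l) ≠ π (Nat.nth (· ∈ firstVisits T π) (l + 1)) := by
  have hlt := nth_firstVisits_lt_succ hl
  have hmem : Nat.nth (· ∈ firstVisits T π) (l + 1) ∈ firstVisits T π :=
    Nat.nth_mem_of_lt_card (firstVisits T π).finite_toSet (by rwa [Finset.finite_toSet_toFinset])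
  obtain ⟨i, -, hi⟩ := Finset.mem_image.1 ((Finset.mem_insert.1 hmem).resolve_left (by omega))
  intro heq
  -- the later checkpoint is the first visit to `T i`, and the earlier one precedes it
  have hlast : π (Nat.nth (· ∈ firstVisits T π) (l + 1)) ∈ T i := hi ▸ Nat.sInf_mem (hvis i)
  exact Nat.notMem_of_lt_sInf (hi ▸ hlt) (show π _ ∈ T i from heq ▸ hlast)

lemma exists_apply_nth_firstVisits_mem (hvis : ∀ i, ∃ j, π j ∈ T i) (i : ι) :
    ∃ l < (firstVisits T π).card, π (Nat.nth (· ∈ firstVisits T π) l) ∈ T i := by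
  obtain ⟨l, hl, hτl⟩ : ∃ l < (firstVisits T π).finite_toSet.toFinset.card,
      Nat.nth (· ∈ firstVisits T π) l = sInf {j | π j ∈ T i} :=
    Nat.exists_lt_card_finite_nth_eq (firstVisits T π).finite_toSet
    (Finset.mem_insert_of_mem (Finset.mem_image_of_mem (fun i => sInf {j | π j ∈ T i})
      (Finset.mem_univ i)))
  rw [Finset.finite_toSet_toFinset] at hl
  exact ⟨l, hl, by rw [hτl]; exact Nat.sInf_mem (hvis i)⟩

end FirstVisits

theorem exists_strategy_reachObj_of_play {ι : Type} [Fintype ι] {T : ι → Set V} {π : ℕ → V}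
    (hπ : A.IsPlay π) (hvis : ∀ i, ∃ j, π j ∈ T i) {k : ℕ} (hk0 : 0 < k)
    (hk : Fintype.card ι ≤ k) :
    ∃ σ : A.Strategy, HasMemorySize σ k ∧
      ∀ i, outcome A (fun _ : Fin n => σ) (π 0) ∈ ReachObj (T i) := by
  set τ := Nat.nth (· ∈ firstVisits T π)
  set x : ℕ → V := fun l => π (τ l)
  have hcard : (firstVisits T π).card - 1 ≤ k := by
    have := card_firstVisits_le (T := T) (π := π)
    omega
  have hx : ∀ l < (firstVisits T π).card - 1,
      x l ≠ x (l + 1) ∧ ∃ d, A.ReachIn d (x l) (x (l + 1)) := by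
    intro l hl
    have hlt : τ l < τ (l + 1) := nth_firstVisits_lt_succ (by omega)
    refine ⟨apply_nth_firstVisits_ne hvis (by omega), τ (l + 1) - τ l, ?_⟩
    simpa [x, Nat.add_sub_cancel' hlt.le] using hπ.reachIn A (τ l) (τ (l + 1) - τ l)
  have hvisit := A.checkpointMachine_visits x hk0 hcard hx
  have hx0 : x 0 = π 0 := by simp [x, τ, nth_firstVisits_zero]
  refine ⟨(A.checkpointMachine x hk0).strategy,
    by simpa using (A.checkpointMachine x hk0).hasMemorySize_strategy, fun i => ?_⟩
  obtain ⟨l, hl, hxl⟩ := exists_apply_nth_firstVisits_mem hvis i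
  rw [← hx0]
  rcases l with _ | l
  · exact ⟨0, hxl⟩
  · obtain ⟨t, ht⟩ := hvisit l (by omega)
    exact ⟨t, ht ▸ hxl⟩

end Arena

open Arena

/-- In reachability games, if there is an NE from `v0` whose outcome
satisfies no (resp. every) player's objective, then there is such an NE whose
strategies all have memory size at most `n`. -/
theorem reach_fm_ne_linear_memory
    (V : Type) (n : ℕ) (A : Arena V n) (T : Fin n → Set V) (v0 : V) :
    ((∃ σ' : Fin n → A.Strategy,
        A.IsNEObj (fun i => ReachObj (T i)) σ' v0 ∧
          ∀ i, outcome A σ' v0 ∉ ReachObj (T i)) →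
      ∃ σ : Fin n → A.Strategy,
        A.IsNEObj (fun i => ReachObj (T i)) σ v0 ∧
        (∀ i, outcome A σ v0 ∉ ReachObj (T i)) ∧
        ∀ i, HasMemorySize (σ i) n) ∧
    ((∃ σ' : Fin n → A.Strategy,
        A.IsNEObj (fun i => ReachObj (T i)) σ' v0 ∧
          ∀ i, outcome A σ' v0 ∈ ReachObj (T i)) →
      ∃ σ : Fin n → A.Strategy,
        A.IsNEObj (fun i => ReachObj (T i)) σ v0 ∧
        (∀ i, outcome A σ v0 ∈ ReachObj (T i)) ∧
        ∀ i, HasMemorySize (σ i) n) := by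
  constructor
  · rintro ⟨σ', hNE, hlose⟩
    rcases Nat.eq_zero_or_pos n with rfl | hn
    · exact ⟨σ', hNE, hlose, fun i => i.elim0⟩
    refine A.exists_losing_ne_of_safe_set hn (S := Set.range (outcome A σ' v0)) ⟨0, rfl⟩ ?_ ?_
    · rintro _ ⟨j, rfl⟩
      exact ⟨_, A.isPlay_outcome σ' v0 j, j + 1, rfl⟩
    · rintro i _ ⟨k, rfl⟩
      exact A.outcome_not_mem_coalWin (closedUnderPrefix_reachObj _) hNE (hlose i) k
  · rintro ⟨σ', hNE, hwin⟩
    rcases Nat.eq_zero_or_pos n with rfl | hn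
    · exact ⟨σ', hNE, hwin, fun i => i.elim0⟩
    obtain ⟨σ, hσ, hreach⟩ :=
      A.exists_strategy_reachObj_of_play (A.isPlay_outcome σ' v0) hwin hn (by simp)
    exact ⟨fun _ => σ, A.isNEObj_of_forall_mem hreach, hreach, fun _ => hσ⟩
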